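/- arXiv:2409.08586 — 3 statements merged into one kernel-verified Lean document; each statement's English description precedes it below -/
import Mathlib

section
/- Let q and r be distinct primes and let G be a primitive subgroup of S_n lying in the variety 𝔄_q𝔄_r with |G| = q^β r^γ where β ≥ 1 and γ ≥ 1. If M is a minimal normal subgroup of G, then |M| = q^β = n, β equals the multiplicative order of q modulo r, G is a semidirect product M ⋊ C_r, and |G| = nr < n². -/
/-!
The normal subgroup `N` of exponent `q` has order `q ^ β`. The minimal normal subgroup `M` of the
primitive group `G` is transitive, and a transitive abelian subgroup is regular and contains its
centralizer; comparing `M` with `N` through `M ⊓ N` gives `M = N`. Hence `|M| = n`, and a point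
stabilizer `H` is a complement of `M` that meets `N` trivially, so it is abelian of exponent `r`.
By minimality of `M`, conjugation makes `M` a faithful irreducible `H`-module, and by Schur's lemma
the ring generated by `H` in `End M` is a finite field `K` with `|K| = |M|`. So `H` embeds in `Kˣ`
and is cyclic of order `r`, and `K`, being generated by `r`-th roots of unity, has
`q ^ orderOf (q : ZMod r)` elements.
-/

/-- A subgroup of the symmetric group on `Fin n` is primitive if it is transitive
and every block of its action is trivial. -/
def IsPrimitiveSubgroup {n : ℕ} (G : Subgroup (Equiv.Perm (Fin n))) : Prop :=
  MulAction.IsPretransitive G (Fin n) ∧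
    ∀ B : Set (Fin n), MulAction.IsBlock G B → B.Subsingleton ∨ B = Set.univ

/-- A group lies in the variety 𝔄_r: abelian of exponent dividing r. -/
def InAr (r : ℕ) (G : Type*) [Group G] : Prop :=
  (∀ a b : G, a * b = b * a) ∧ ∀ a : G, a ^ r = 1

/-- A group lies in the variety 𝔄_q𝔄_r: there is an abelian normal subgroup of
exponent dividing q with abelian quotient of exponent dividing r. -/
def InAqAr (q r : ℕ) (G : Type*) [Group G] : Prop :=
  ∃ N : Subgroup G, N.Normal ∧ (∀ a ∈ N, ∀ b ∈ N, a * b = b * a) ∧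
    (∀ a ∈ N, a ^ q = 1) ∧ (∀ a b : G, a * b * a⁻¹ * b⁻¹ ∈ N) ∧ (∀ a : G, a ^ r ∈ N)

open Function MulAction
open scoped IsMulCommutative commutatorElement

theorem Nat.eq_of_prime_pow_mul_prime_pow_eq {q r a b c d : ℕ} (hq : q.Prime) (hr : r.Prime)
    (hqr : q ≠ r) (h : q ^ a * r ^ b = q ^ c * r ^ d) : a = c := by
  have := congrArg (·.factorization q) h
  simpa [Nat.factorization_mul, hq.ne_zero, hr.ne_zero, hq.factorization_pow,
    hr.factorization_pow, Finsupp.single_apply, hqr.symm] using this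

theorem orderOf_natCast_dvd_of_dvd_pow_sub_one {q r m : ℕ} (hq : q ≠ 0) (h : r ∣ q ^ m - 1) :
    orderOf (q : ZMod r) ∣ m := by
  apply orderOf_dvd_of_pow_eq_one
  rw [← ZMod.natCast_eq_zero_iff, Nat.cast_sub (Nat.one_le_pow _ _ (Nat.pos_of_ne_zero hq))] at h
  push_cast at h
  exact sub_eq_zero.mp h

theorem lt_pow_orderOf_natCast {q r : ℕ} (hq : q.Prime) (hr : r.Prime) (hqr : q ≠ r) :
    r < q ^ orderOf (q : ZMod r) := by
  have : Fact r.Prime := ⟨hr⟩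
  have hq0 : (q : ZMod r) ≠ 0 := by
    rw [Ne, ZMod.natCast_eq_zero_iff, Nat.prime_dvd_prime_iff_eq hr hq]
    exact hqr.symm
  have hpos : 0 < orderOf (q : ZMod r) :=
    orderOf_pos_iff.mpr (isOfFinOrder_iff_pow_eq_one.mpr
      ⟨r - 1, Nat.sub_pos_of_lt hr.one_lt, ZMod.pow_card_sub_one_eq_one hq0⟩)
  have h1 : 1 < q ^ orderOf (q : ZMod r) := Nat.one_lt_pow hpos.ne' hq.one_lt
  have hdvd : r ∣ q ^ orderOf (q : ZMod r) - 1 := by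
    rw [← ZMod.natCast_eq_zero_iff, Nat.cast_sub h1.le]
    push_cast
    exact sub_eq_zero.mpr (pow_orderOf_eq_one _)
  have := Nat.le_of_dvd (Nat.sub_pos_of_lt h1) hdvd
  omega

section Group

variable {G : Type*} [Group G]

theorem card_eq_of_pow_eq_one_of_pow_mem {N : Subgroup G} [N.Normal] {q r β γ : ℕ}
    (hq : q.Prime) (hr : r.Prime) (hqr : q ≠ r) (hN : ∀ a ∈ N, a ^ q = 1)
    (hGN : ∀ a : G, a ^ r ∈ N) (hcard : Nat.card G = q ^ β * r ^ γ) : Nat.card N = q ^ β := by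
  have : Fact q.Prime := ⟨hq⟩
  have : Fact r.Prime := ⟨hr⟩
  have : Finite G :=
    Nat.finite_of_card_ne_zero (hcard ▸ (Nat.mul_pos (pow_pos hq.pos _) (pow_pos hr.pos _)).ne')
  have hNq : IsPGroup q N := fun a ↦ ⟨1, Subtype.ext (by simpa using hN a a.2)⟩
  have hGNr : IsPGroup r (G ⧸ N) := fun a ↦ ⟨1, by
    induction a using QuotientGroup.induction_on with
    | H g => rw [pow_one, ← QuotientGroup.mk_pow, QuotientGroup.eq_one_iff]; exact hGN g⟩
  obtain ⟨a, ha⟩ := hNq.exists_card_eq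
  obtain ⟨b, hb⟩ := hGNr.exists_card_eq
  rw [Subgroup.card_eq_card_quotient_mul_card_subgroup N, ha, hb, mul_comm] at hcard
  rw [ha, Nat.eq_of_prime_pow_mul_prime_pow_eq hq hr hqr hcard]

theorem isMulCommutative_of_disjoint {N H : Subgroup G} (hcomm : ∀ a b : G, ⁅a, b⁆ ∈ N)
    (hNH : Disjoint N H) : IsMulCommutative H :=
  .of_setLike_mul_comm fun a ha b hb ↦ commutatorElement_eq_one_iff_mul_comm.mp <|
    Subgroup.disjoint_def.mp hNH (hcomm a b) <| by
      rw [commutatorElement_def]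
      exact mul_mem (mul_mem (mul_mem ha hb) (inv_mem ha)) (inv_mem hb)

theorem pow_eq_one_of_disjoint {N H : Subgroup G} {r : ℕ} (hpow : ∀ a : G, a ^ r ∈ N)
    (hNH : Disjoint N H) (h : H) : h ^ r = 1 :=
  Subtype.ext (Subgroup.disjoint_def.mp hNH (hpow h) (pow_mem h.2 r))

theorem eq_of_minimal_normal {M N : Subgroup G} [hM : M.Normal] [N.Normal] [IsMulCommutative N]
    (hcomm : ∀ a b : G, ⁅a, b⁆ ∈ N) (hN : N ≠ ⊥)
    (hMmin : ∀ K : Subgroup G, K.Normal → K ≠ ⊥ → K ≤ M → K = M)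
    (hcent : IsMulCommutative M → Subgroup.centralizer M ≤ M) : M = N := by
  by_cases hMN : M ⊓ N = ⊥
  · have hcentral : ∀ a ∈ M, ∀ b : G, a * b = b * a := fun a ha b ↦ by
      have hM : ⁅a, b⁆ ∈ M := by
        rw [commutatorElement_def, mul_assoc, mul_assoc, ← mul_assoc b]
        exact mul_mem ha (hM.conj_mem _ (inv_mem ha) b)
      rw [← commutatorElement_eq_one_iff_mul_comm, ← Subgroup.mem_bot, ← hMN]
      exact ⟨hM, hcomm a b⟩
    have : IsMulCommutative M := .of_setLike_mul_comm fun a ha b _ ↦ hcentral a ha b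
    have hNM : N ≤ M := fun n _ ↦
      hcent this (Subgroup.mem_centralizer_iff.mpr fun m hm ↦ hcentral m hm n)
    exact absurd (eq_bot_iff.mpr (hMN ▸ le_inf hNM le_rfl)) hN
  · have hle : M ≤ N := inf_eq_left.mp (hMmin _ inferInstance hMN inf_le_left)
    have : IsMulCommutative M :=
      .of_setLike_mul_comm fun a ha b hb ↦ setLike_mul_comm (hle ha) (hle hb)
    refine le_antisymm hle fun n hn ↦ hcent this ?_
    exact Subgroup.mem_centralizer_iff.mpr fun m hm ↦ setLike_mul_comm (hle hm) hn

end Group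

section Action

variable {G X : Type*} [Group G] [MulAction G X] [FaithfulSMul G X]

theorem nonempty_of_ne_bot {M : Subgroup G} (hM : M ≠ ⊥) : Nonempty X := by
  by_contra hX
  rw [not_nonempty_iff] at hX
  exact hM <| (Subgroup.eq_bot_iff_forall _).mpr fun g _ ↦
    eq_of_smul_eq_smul (α := X) fun x ↦ isEmptyElim x

theorem isPretransitive_of_normal_of_ne_bot [IsPreprimitive G X] {M : Subgroup G} [M.Normal]
    (hM : M ≠ ⊥) : IsPretransitive M X := by
  refine IsQuasiPreprimitive.isPretransitive_of_normal fun hfix ↦ hM ?_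
  refine (Subgroup.eq_bot_iff_forall _).mpr fun g hg ↦ eq_of_smul_eq_smul (α := X) fun x ↦ ?_
  have hx : x ∈ fixedPoints M X := hfix ▸ Set.mem_univ x
  simpa using hx ⟨g, hg⟩

variable {M : Subgroup G}

theorem eq_one_of_mem_centralizer_of_smul_eq [IsPretransitive M X] {g : G}
    (hg : g ∈ Subgroup.centralizer M) {x : X} (hx : g • x = x) : g = 1 := by
  refine eq_of_smul_eq_smul (α := X) fun y ↦ ?_
  obtain ⟨m, rfl⟩ := exists_smul_eq M x y
  rw [one_smul, Subgroup.smul_def, ← mul_smul, ← Subgroup.mem_centralizer_iff.mp hg m m.2,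
    mul_smul, hx]

variable [IsMulCommutative M]

theorem centralizer_le_of_isPretransitive (hM : IsPretransitive M X) :
    Subgroup.centralizer M ≤ M := by
  intro g hg
  rcases isEmpty_or_nonempty X with hX | ⟨⟨x⟩⟩
  · rw [eq_of_smul_eq_smul (α := X) (m₁ := g) (m₂ := 1) fun x ↦ isEmptyElim x]
    exact one_mem M
  obtain ⟨m, hm⟩ := exists_smul_eq M x (g • x)
  have hmg : (m : G)⁻¹ * g = 1 := by
    refine eq_one_of_mem_centralizer_of_smul_eq (M := M) (mul_mem ?_ hg) (x := x) ?_
    · exact inv_mem (Subgroup.le_centralizer_iff_isMulCommutative.mpr ‹_› m.2)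
    · rw [mul_smul, ← hm, Subgroup.smul_def, inv_smul_smul]
  rw [← inv_mul_eq_one.mp hmg]
  exact m.2

theorem eq_one_of_smul_eq_self [IsPretransitive M X] {m : M} {x : X} (h : m • x = x) : m = 1 :=
  Subtype.ext <| eq_one_of_mem_centralizer_of_smul_eq
    (Subgroup.le_centralizer_iff_isMulCommutative.mpr ‹_› m.2) h

theorem isComplement'_stabilizer_of_isPretransitive [IsPretransitive M X] (x : X) :
    M.IsComplement' (stabilizer G x) :=
  Subgroup.isComplement'_stabilizer x (fun _ ↦ eq_one_of_smul_eq_self) fun g ↦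
    exists_smul_eq M (g • x) x

theorem natCard_eq_of_isPretransitive [IsPretransitive M X] [Nonempty X] :
    Nat.card M = Nat.card X := by
  obtain ⟨x⟩ := ‹Nonempty X›
  refine Nat.card_eq_of_bijective (fun m : M ↦ m • x) ⟨fun m₁ m₂ h ↦ ?_, exists_smul_eq M x⟩
  refine inv_mul_eq_one.mp (eq_one_of_smul_eq_self (x := x) ?_)
  rw [mul_smul, ← show m₁ • x = m₂ • x from h, inv_smul_smul]

end Action

theorem IsPrimitiveSubgroup.isPreprimitive {n : ℕ} {G : Subgroup (Equiv.Perm (Fin n))}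
    (hG : IsPrimitiveSubgroup G) : IsPreprimitive G (Fin n) :=
  { toIsPretransitive := hG.1, isTrivialBlock_of_isBlock := hG.2 _ }

theorem Subring.closure_closure_coe_preimage {R : Type*} [Ring R] {s : Set R} :
    closure (((↑) : closure s → R) ⁻¹' s) = ⊤ :=
  eq_top_iff.2 fun x _ ↦ Subtype.recOn x fun _ hx ↦
    closure_induction (fun _ h ↦ subset_closure h) (zero_mem _) (one_mem _)
      (fun _ _ _ _ ↦ add_mem) (fun _ _ ↦ neg_mem) (fun _ _ _ _ ↦ mul_mem) hx

theorem pow_pow_orderOf_eq_self {K : Type*} [CommRing K] {q r : ℕ} [ExpChar K q] {S : Set K}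
    (hS : Subring.closure S = ⊤) (hSr : ∀ x ∈ S, x ^ r = 1) (x : K) :
    x ^ q ^ orderOf (q : ZMod r) = x := by
  have hmod : q ^ orderOf (q : ZMod r) ≡ 1 [MOD r] := by
    rw [← ZMod.natCast_eq_natCast_iff]
    push_cast
    exact pow_orderOf_eq_one _
  have hfix : Set.EqOn (iterateFrobenius K q (orderOf (q : ZMod r))) (RingHom.id K) S :=
    fun y hy ↦ by
      rw [iterateFrobenius_def, RingHom.id_apply, pow_eq_pow_mod _ (hSr y hy), hmod,
        ← pow_eq_pow_mod _ (hSr y hy), pow_one]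
  have := RingHom.eqOn_set_closure hfix (hS ▸ Subring.mem_top x)
  rwa [iterateFrobenius_def] at this

theorem IsCyclic.card_eq_prime_of_pow_eq_one {H : Type*} [Group H] [IsCyclic H] [Finite H]
    [Nontrivial H] {r : ℕ} (hr : r.Prime) (hHr : ∀ h : H, h ^ r = 1) : Nat.card H = r := by
  have hdvd : Nat.card H ∣ r :=
    IsCyclic.exponent_eq_card (α := H) ▸ Monoid.exponent_dvd_of_forall_pow_eq_one hHr
  exact (hr.eq_one_or_self_of_dvd _ hdvd).resolve_left Finite.one_lt_card.ne'

theorem card_eq_of_closure_range_eq_top {K H : Type*} [Field K] [Finite K] [Group H]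
    [Nontrivial H] {q r : ℕ} [CharP K q] (hq : q.Prime) (hr : r.Prime)
    (hHr : ∀ h : H, h ^ r = 1) (f : H →* K) (hf : Injective f)
    (hclos : Subring.closure (Set.range f) = ⊤) :
    Nat.card H = r ∧ Nat.card K = q ^ orderOf (q : ZMod r) := by
  have : Fact q.Prime := ⟨hq⟩
  have : Finite H := .of_injective f hf
  have : IsCyclic H := isCyclic_of_injective_ringHom f hf
  have hH : Nat.card H = r := IsCyclic.card_eq_prime_of_pow_eq_one hr hHr
  refine ⟨hH, ?_⟩
  have hfU : Injective f.toHomUnits := fun a b h ↦ hf (congrArg Units.val h)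
  have hrK : r ∣ Nat.card K - 1 := hH ▸ Nat.card_units K ▸ Subgroup.card_dvd_of_injective _ hfU
  have hfrob : ∀ x : K, x ^ q ^ orderOf (q : ZMod r) = x := by
    refine pow_pow_orderOf_eq_self (q := q) hclos ?_
    rintro _ ⟨h, rfl⟩
    rw [← map_pow, hHr, map_one]
  set d := orderOf (q : ZMod r)
  have := Fintype.ofFinite K
  obtain ⟨m, -, hm⟩ := FiniteField.card K q
  rw [Nat.card_eq_fintype_card, hm] at hrK ⊢
  have hdm : q ^ d - 1 ∣ q ^ (m : ℕ) - 1 :=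
    Nat.pow_sub_one_dvd_pow_sub_one _ (orderOf_natCast_dvd_of_dvd_pow_sub_one hq.ne_zero hrK)
  have hmd : q ^ (m : ℕ) - 1 ∣ q ^ d - 1 := by
    rw [← hm, ← FiniteField.forall_pow_eq_one_iff]
    intro x
    have hx : x ^ q ^ d = x := Units.ext (by push_cast; exact hfrob x)
    rw [pow_sub _ (Nat.one_le_pow _ _ hq.pos), hx, pow_one, mul_inv_cancel]
  have := Nat.dvd_antisymm hdm hmd
  have := Nat.one_le_pow d q hq.pos
  have := Nat.one_le_pow m q hq.pos
  omega

section Irreducible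

variable {H V : Type*} [Monoid H] [AddCommGroup V] (ρ : H →* AddMonoid.End V)

def IsIrreducibleRep : Prop :=
  ∀ W : AddSubgroup V, (∀ h, ∀ v ∈ W, ρ h v ∈ W) → W = ⊥ ∨ W = ⊤

def envelopingRing : Subring (AddMonoid.End V) :=
  Subring.closure (Set.range ρ)

theorem mem_envelopingRing (h : H) : ρ h ∈ envelopingRing ρ :=
  Subring.subset_closure ⟨h, rfl⟩

instance envelopingRing.isMulCommutative [IsMulCommutative H] :
    IsMulCommutative (envelopingRing ρ) :=
  Subring.isMulCommutative_closure <| by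
    rintro _ ⟨a, rfl⟩ _ ⟨b, rfl⟩
    rw [← map_mul, ← map_mul, mul_comm a b]

theorem closure_range_codRestrict_envelopingRing :
    Subring.closure (Set.range (ρ.codRestrict _ (mem_envelopingRing ρ))) = ⊤ := by
  refine Eq.trans (congrArg Subring.closure ?_) Subring.closure_closure_coe_preimage
  ext x
  constructor
  · rintro ⟨h, rfl⟩
    exact ⟨h, rfl⟩
  · rintro ⟨h, hx⟩
    exact ⟨h, Subtype.ext hx⟩

theorem natCast_eq_zero_envelopingRing {q : ℕ} (hV : ∀ v : V, q • v = 0) :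
    (q : envelopingRing ρ) = 0 :=
  Subtype.ext (AddMonoidHom.ext hV)

variable {ρ} [IsMulCommutative H]

/-- Schur's lemma. -/
theorem IsIrreducibleRep.injective_of_mem_envelopingRing (hρ : IsIrreducibleRep ρ)
    {a : AddMonoid.End V} (ha : a ∈ envelopingRing ρ) (ha0 : a ≠ 0) : Injective a := by
  refine (hρ a.ker fun h v hv ↦ ?_).elim (AddMonoidHom.ker_eq_bot_iff a).mp fun htop ↦ ?_
  · have hcomm : a * ρ h = ρ h * a := setLike_mul_comm ha (mem_envelopingRing ρ h)
    change a v = 0 at hv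
    change (a * ρ h) v = 0
    rw [hcomm]
    exact (congrArg (ρ h) hv).trans (map_zero _)
  · refine absurd (AddMonoidHom.ext fun v ↦ ?_) ha0
    have hv : v ∈ a.ker := htop ▸ AddSubgroup.mem_top v
    exact hv

theorem IsIrreducibleRep.bijective_apply_envelopingRing (hρ : IsIrreducibleRep ρ) {v : V}
    (hv : v ≠ 0) : Bijective fun a : envelopingRing ρ ↦ (a : AddMonoid.End V) v := by
  let ev : envelopingRing ρ →+ V :=
    { toFun a := (a : AddMonoid.End V) v, map_zero' := rfl, map_add' _ _ := rfl }
  refine ⟨(injective_iff_map_eq_zero ev).mpr fun a ha ↦ ?_, fun w ↦ ?_⟩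
  · by_contra ha0
    exact hv (hρ.injective_of_mem_envelopingRing a.2 (by simpa using ha0)
      (ha.trans (map_zero _).symm))
  · have hrange : ev.range = ⊤ := by
      refine (hρ ev.range ?_).resolve_left fun hbot ↦ hv ?_
      · rintro h _ ⟨a, rfl⟩
        exact ⟨⟨ρ h, mem_envelopingRing ρ h⟩ * a, rfl⟩
      · have h1 : ev 1 ∈ ev.range := ⟨1, rfl⟩
        rw [hbot, AddSubgroup.mem_bot] at h1
        exact h1
    exact (hrange ▸ AddSubgroup.mem_top w : w ∈ ev.range)

theorem IsIrreducibleRep.isField_envelopingRing [Finite V] [Nontrivial V]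
    (hρ : IsIrreducibleRep ρ) : IsField (envelopingRing ρ) := by
  obtain ⟨v, hv⟩ := exists_ne (0 : V)
  have hev := hρ.bijective_apply_envelopingRing hv
  have : Finite (envelopingRing ρ) := .of_injective _ hev.1
  have : Nontrivial (envelopingRing ρ) := hev.2.nontrivial
  have : NoZeroDivisors (envelopingRing ρ) := by
    refine ⟨fun {a b} hab ↦ or_iff_not_imp_left.mpr fun ha ↦
      Subtype.ext (AddMonoidHom.ext fun x ↦ ?_)⟩
    have hab' : (a : AddMonoid.End V) * b = 0 := congrArg Subtype.val hab
    refine hρ.injective_of_mem_envelopingRing a.2 (fun h ↦ ha (Subtype.ext h)) ?_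
    exact (DFunLike.congr_fun hab' x).trans (map_zero (a : AddMonoid.End V)).symm
  have : IsDomain (envelopingRing ρ) := NoZeroDivisors.to_isDomain _
  exact Finite.isField_of_domain _

end Irreducible

theorem IsIrreducibleRep.card_eq_of_injective {H V : Type*} [Group H] [IsMulCommutative H]
    [Nontrivial H] [AddCommGroup V] [Finite V] [Nontrivial V] {ρ : H →* AddMonoid.End V}
    (hρ : IsIrreducibleRep ρ) (hinj : Injective ρ) {q r : ℕ} (hq : q.Prime) (hr : r.Prime)
    (hV : ∀ v : V, q • v = 0) (hHr : ∀ h : H, h ^ r = 1) :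
    Nat.card H = r ∧ Nat.card V = q ^ orderOf (q : ZMod r) := by
  obtain ⟨v, hv⟩ := exists_ne (0 : V)
  have hev := hρ.bijective_apply_envelopingRing hv
  let : Field (envelopingRing ρ) := hρ.isField_envelopingRing.toField
  have : Finite (envelopingRing ρ) := .of_injective _ hev.1
  have : CharP (envelopingRing ρ) q :=
    (CharP.charP_iff_prime_eq_zero hq).mpr (natCast_eq_zero_envelopingRing ρ hV)
  rw [← Nat.card_eq_of_bijective _ hev]
  exact card_eq_of_closure_range_eq_top hq hr hHr _ (fun a b h ↦ hinj (congrArg Subtype.val h))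
    (closure_range_codRestrict_envelopingRing ρ)

theorem IsIrreducibleRep.comp_subtype {G V : Type*} [Group G] [AddCommGroup V]
    {ρ : G →* AddMonoid.End V} (hρ : IsIrreducibleRep ρ) {K : Subgroup G} (hK : ρ.ker ⊔ K = ⊤) :
    IsIrreducibleRep (ρ.comp K.subtype) := fun W hW ↦ hρ W fun g v hv ↦ by
  have hg : g ∈ (↑(ρ.ker ⊔ K) : Set G) := hK ▸ Subgroup.mem_top g
  rw [Subgroup.normal_mul] at hg
  obtain ⟨a, ha, k, hk, rfl⟩ := hg
  rw [map_mul, MonoidHom.mem_ker.mp ha, one_mul]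
  exact hW ⟨k, hk⟩ v hv

section Conjugation

variable {G : Type*} [Group G]

def conjEnd (M : Subgroup G) [M.Normal] : G →* AddMonoid.End (Additive M) :=
  (monoidEndToAdditive M).toMonoidHom.comp
    ((MulDistribMulAction.toMonoidEnd (MulAut M) M).comp MulAut.conjNormal)

variable {M : Subgroup G} [M.Normal]

theorem coe_toMul_conjEnd (g : G) (v : Additive M) :
    ((conjEnd M g v).toMul : G) = g * v.toMul * g⁻¹ :=
  MulAut.conjNormal_apply g v.toMul

theorem ker_conjEnd : (conjEnd M).ker = Subgroup.centralizer M := by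
  ext g
  rw [MonoidHom.mem_ker, Subgroup.mem_centralizer_iff]
  refine ⟨fun h m hm ↦ ?_, fun h ↦ DFunLike.ext _ _ fun v ↦ ?_⟩
  · have := congrArg (fun f : AddMonoid.End (Additive M) ↦
      ((f (Additive.ofMul (⟨m, hm⟩ : M))).toMul : G)) h
    simp only [coe_toMul_conjEnd] at this
    exact (mul_inv_eq_iff_eq_mul.mp this).symm
  · refine Additive.toMul.injective (Subtype.ext ?_)
    rw [coe_toMul_conjEnd]
    exact mul_inv_eq_of_eq_mul (h _ v.toMul.2).symm

theorem injective_conjEnd_comp_subtype (hcent : Subgroup.centralizer M ≤ M) {H : Subgroup G}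
    (hMH : Disjoint M H) : Injective ((conjEnd M).comp H.subtype) := by
  refine (injective_iff_map_eq_one _).mpr fun h hh ↦ Subtype.ext ?_
  have hhM : (h : G) ∈ M := hcent (ker_conjEnd (M := M) ▸ MonoidHom.mem_ker.mpr hh)
  exact Subgroup.disjoint_def.mp hMH hhM h.2

theorem isIrreducibleRep_conjEnd [IsMulCommutative M]
    (hMmin : ∀ K : Subgroup G, K.Normal → K ≠ ⊥ → K ≤ M → K = M) :
    IsIrreducibleRep (conjEnd M) := by
  intro W hW
  set K : Subgroup G := (AddSubgroup.toSubgroup' W).map M.subtype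
  have hK : K.Normal := ⟨by
    rintro _ ⟨m, hm, rfl⟩ g
    exact ⟨(conjEnd M g (.ofMul m)).toMul, hW g _ hm, coe_toMul_conjEnd g (.ofMul m)⟩⟩
  rcases eq_or_ne K ⊥ with hbot | hne
  · left
    rwa [Subgroup.map_eq_bot_iff_of_injective _ M.subtype_injective,
      ← map_bot AddSubgroup.toSubgroup', AddSubgroup.toSubgroup'.injective.eq_iff] at hbot
  · right
    have htop := hMmin K hK hne (Subgroup.map_subtype_le _)
    rwa [← Subgroup.range_subtype M, MonoidHom.range_eq_map,
      (Subgroup.map_injective M.subtype_injective).eq_iff, ← map_top AddSubgroup.toSubgroup',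
      AddSubgroup.toSubgroup'.injective.eq_iff] at htop

theorem card_eq_of_isComplement'_of_minimal_normal [Finite G] [IsMulCommutative M]
    {H : Subgroup G} [IsMulCommutative H] [Nontrivial H] (hMH : M.IsComplement' H)
    (hcent : Subgroup.centralizer M ≤ M) (hM : M ≠ ⊥)
    (hMmin : ∀ K : Subgroup G, K.Normal → K ≠ ⊥ → K ≤ M → K = M) {q r : ℕ} (hq : q.Prime)
    (hr : r.Prime) (hMq : ∀ a ∈ M, a ^ q = 1) (hHr : ∀ h : H, h ^ r = 1) :
    Nat.card H = r ∧ Nat.card M = q ^ orderOf (q : ZMod r) := by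
  have : Nontrivial M := (Subgroup.nontrivial_iff_ne_bot M).mpr hM
  have hker : (conjEnd M).ker ⊔ H = ⊤ := by
    rw [eq_top_iff, ← hMH.sup_eq_top, ker_conjEnd]
    exact sup_le_sup_right (Subgroup.le_centralizer_iff_isMulCommutative.mpr ‹_›) _
  exact ((isIrreducibleRep_conjEnd hMmin).comp_subtype hker).card_eq_of_injective
    (injective_conjEnd_comp_subtype hcent hMH.disjoint) hq hr
    (fun v ↦ Additive.toMul.injective (Subtype.ext (hMq _ v.toMul.2))) hHr

end Conjugation

/-- Theorem B(ii): structure of a primitive subgroup of S_n lying in 𝔄_q𝔄_r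
with order q^β r^γ, β ≥ 1, γ ≥ 1. -/
theorem primitive_AqAr_structure (q r n β γ : ℕ) (hq : q.Prime) (hr : r.Prime)
    (hqr : q ≠ r) (hβ : 1 ≤ β) (hγ : 1 ≤ γ)
    (G : Subgroup (Equiv.Perm (Fin n))) (hprim : IsPrimitiveSubgroup G)
    (hvar : InAqAr q r G) (hcard : Nat.card G = q ^ β * r ^ γ)
    (M : Subgroup G) (hMnormal : M.Normal) (hMne : M ≠ ⊥)
    (hMmin : ∀ N : Subgroup G, N.Normal → N ≠ ⊥ → N ≤ M → N = M) :
    Nat.card M = q ^ β ∧ q ^ β = n ∧ β = orderOf (q : ZMod r) ∧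
      (∃ H : Subgroup G, Nat.card H = r ∧ M ⊓ H = ⊥ ∧ M ⊔ H = ⊤) ∧
      Nat.card G = n * r ∧ n * r < n ^ 2 := by
  obtain ⟨N, hN, hNcomm, hNexp, hcomm, hpow⟩ := hvar
  have : IsPreprimitive G (Fin n) := hprim.isPreprimitive
  have : IsMulCommutative N := .of_setLike_mul_comm hNcomm
  have hNcard : Nat.card N = q ^ β := card_eq_of_pow_eq_one_of_pow_mem hq hr hqr hNexp hpow hcard
  have hNbot : N ≠ ⊥ := fun h ↦ by
    rw [h, Subgroup.card_bot] at hNcard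
    exact absurd hNcard.symm (Nat.one_lt_pow (by omega) hq.one_lt).ne'
  have : IsPretransitive M (Fin n) := isPretransitive_of_normal_of_ne_bot hMne
  obtain rfl : M = N :=
    eq_of_minimal_normal hcomm hNbot hMmin fun _ ↦ centralizer_le_of_isPretransitive ‹_›
  have : Nonempty (Fin n) := nonempty_of_ne_bot (X := Fin n) hMne
  have hMn : Nat.card M = n := by rw [natCard_eq_of_isPretransitive (X := Fin n), Nat.card_fin]
  obtain ⟨x⟩ := this
  have hMH : M.IsComplement' (stabilizer G x) := isComplement'_stabilizer_of_isPretransitive x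
  have hHcard : Nat.card (stabilizer G x) = r ^ γ := by
    refine Nat.eq_of_mul_eq_mul_left (pow_pos hq.pos β) ?_
    rw [← hNcard, hMH.card_mul_card, hcard, hNcard]
  have : IsMulCommutative (stabilizer G x) := isMulCommutative_of_disjoint hcomm hMH.disjoint
  have : Nontrivial (stabilizer G x) :=
    Finite.one_lt_card_iff_nontrivial.mp (hHcard ▸ Nat.one_lt_pow (by omega) hr.one_lt)
  obtain ⟨hHr, hMd⟩ := card_eq_of_isComplement'_of_minimal_normal hMH
    (centralizer_le_of_isPretransitive ‹_›) hMne hMmin hq hr hNexp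
    (pow_eq_one_of_disjoint hpow hMH.disjoint)
  have hβd : β = orderOf (q : ZMod r) := Nat.pow_right_injective hq.two_le (hNcard.symm.trans hMd)
  refine ⟨hNcard, hNcard ▸ hMn, hβd, ⟨_, hHr, disjoint_iff.mp hMH.disjoint, hMH.sup_eq_top⟩,
    ?_, ?_⟩
  · rw [← hMH.card_mul_card, hMn, hHr]
  · have hrn := lt_pow_orderOf_natCast hq hr hqr
    rw [← hβd, ← hNcard, hMn] at hrn
    rw [sq]
    exact Nat.mul_lt_mul_of_pos_left hrn (by omega)
end

section
/- Let s be a prime power and r a prime with gcd(r,s) = 1. Any two irreducible cyclic subgroups of order r in GL(α, F_s) are conjugate in GL(α, F_s). -/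
/-- A subgroup of GL(α, F) is irreducible if the only subspaces of F^α invariant
under all its elements are 0 and the whole space. -/
def IsIrreducibleSubgroup {α : ℕ} {F : Type*} [Field F]
    (G : Subgroup (Matrix.GeneralLinearGroup (Fin α) F)) : Prop :=
  ∀ W : Submodule F (Fin α → F),
    (∀ g ∈ G, ∀ v ∈ W, (g : Matrix (Fin α) (Fin α) F).mulVec v ∈ W) → W = ⊥ ∨ W = ⊤

/-!
Let `g` generate `G`. Irreducibility makes `F^α`, with `X` acting as `g`, a simple `F[X]`-module,
so its annihilator `I_g = {p | p(g) = 0}` is a maximal ideal. It contains `X^r - 1` but not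
`X - 1`, so the class `x` of `X` is a primitive `r`-th root of unity in the field `F[X] ⧸ I_g`,
and `X^r - 1` splits there. A root `x^k` of a generator of `I_h` then gives `I_h = I_{g^k}`.
Simple modules over a commutative ring are determined by their annihilators, and an
`F[X]`-isomorphism between `F^α` with `X` acting as `g^k` and as `h` is a matrix conjugating `g^k`
to `h`; since `g^k ≠ 1` generates `G`, it conjugates `G` onto `H`.
-/

open Polynomial Module

theorem IsSimpleModule.nonempty_linearEquiv_of_annihilator_eq {R M N : Type*} [CommRing R]
    [AddCommGroup M] [Module R M] [AddCommGroup N] [Module R N] [IsSimpleModule R M]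
    [IsSimpleModule R N] (h : annihilator R M = annihilator R N) : Nonempty (M ≃ₗ[R] N) := by
  obtain ⟨I, -, ⟨e⟩⟩ := isSimpleModule_iff_quot_maximal.mp ‹IsSimpleModule R M›
  obtain ⟨J, -, ⟨e'⟩⟩ := isSimpleModule_iff_quot_maximal.mp ‹IsSimpleModule R N›
  obtain rfl : I = J := by
    rw [← Ideal.annihilator_quotient (I := I), ← Ideal.annihilator_quotient (I := J),
      ← e.annihilator_eq, ← e'.annihilator_eq, h]
  exact ⟨e.trans e'.symm⟩

namespace Module.End

variable {R M : Type*} [CommRing R] [AddCommGroup M] [Module R M]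

theorem isSimpleModule_aeval [Nontrivial M] (T : Module.End R M)
    (hT : ∀ W : Submodule R M, W ≤ W.comap T → W = ⊥ ∨ W = ⊤) :
    IsSimpleModule R[X] (AEval' T) := by
  have : Nontrivial (AEval' T) := (AEval'.of T).symm.toEquiv.nontrivial
  refine { eq_bot_or_eq_top := fun q => ?_ }
  set W := (AEval.mapSubmodule R M T).symm q
  obtain h | h := hT W ((mem_invtSubmodule T).mp W.2)
  · exact .inl (by simpa [W] using congrArg (AEval.mapSubmodule R M T) (Subtype.ext h : W = ⊥))
  · exact .inr (by simpa [W] using congrArg (AEval.mapSubmodule R M T) (Subtype.ext h : W = ⊤))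

theorem ker_aeval_isMaximal (T : Module.End R M) [IsSimpleModule R[X] (AEval' T)] :
    (RingHom.ker (aeval (R := R) T)).IsMaximal :=
  AEval.annihilator_eq_ker_aeval (R := R) (M := M) T ▸ IsSimpleModule.annihilator_isMaximal

theorem ker_aeval_pow (T : Module.End R M) (n : ℕ) :
    RingHom.ker (aeval (T ^ n)) = (RingHom.ker (aeval T)).comap (expand R n) := by
  ext p
  simp

end Module.End

namespace LinearMap.GeneralLinearGroup

variable {R M : Type*} [CommRing R] [AddCommGroup M] [Module R M]

theorem X_pow_sub_one_mem_ker_aeval_iff (U : GeneralLinearGroup R M) (n : ℕ) :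
    (X ^ n - 1 : R[X]) ∈ RingHom.ker (aeval (U : Module.End R M)) ↔ U ^ n = 1 := by
  simp [sub_eq_zero, ← Units.val_pow_eq_pow_val]

theorem isConj_of_aeval_linearEquiv {S T : GeneralLinearGroup R M}
    (e : AEval' (S : Module.End R M) ≃ₗ[R[X]] AEval' (T : Module.End R M)) : IsConj S T := by
  let f : M ≃ₗ[R] M := (AEval'.of _).trans ((e.restrictScalars R).trans (AEval'.of _).symm)
  refine isConj_iff.mpr ⟨ofLinearEquiv f, mul_inv_eq_iff_eq_mul.mpr <|
    Units.ext <| LinearMap.ext fun m => ?_⟩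
  simp [f, ← AEval'.X_smul_of]

theorem isConj_of_ker_aeval_eq {S T : GeneralLinearGroup R M}
    [IsSimpleModule R[X] (AEval' (S : Module.End R M))]
    [IsSimpleModule R[X] (AEval' (T : Module.End R M))]
    (h : RingHom.ker (aeval (R := R) (S : Module.End R M)) =
      RingHom.ker (aeval (R := R) (T : Module.End R M))) :
    IsConj S T := by
  rw [← AEval.annihilator_eq_ker_aeval (M := M), ← AEval.annihilator_eq_ker_aeval (M := M)] at h
  obtain ⟨e⟩ := IsSimpleModule.nonempty_linearEquiv_of_annihilator_eq h
  exact isConj_of_aeval_linearEquiv e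

end LinearMap.GeneralLinearGroup

/-- `I.comap (expand K k)` is the kernel of `K[X] → K[X] ⧸ I`, `X ↦ x ^ k`, where `x` is the
class of `X`. -/
theorem Polynomial.exists_comap_expand_eq {K : Type*} [Field K] {r : ℕ} (hr : r.Prime)
    {I J : Ideal K[X]} [I.IsMaximal] [hJ : J.IsMaximal]
    (hrI : X ^ r - 1 ∈ I) (h1I : X - 1 ∉ I) (hrJ : X ^ r - 1 ∈ J) :
    ∃ k, I.comap (expand K k) = J := by
  have : Fact r.Prime := ⟨hr⟩
  let := Ideal.Quotient.field I
  have hmk (p : K[X]) : Ideal.Quotient.mk I p = aeval (Ideal.Quotient.mk I X) p := by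
    rw [← Ideal.Quotient.mkₐ_eq_mk K, aeval_algHom_apply, aeval_X_left_apply]
  have hx : IsPrimitiveRoot (Ideal.Quotient.mk I X) r := by
    rw [← Ideal.Quotient.eq_zero_iff_mem, map_sub, map_pow, map_one, sub_eq_zero] at hrI
    rw [← Ideal.Quotient.eq_zero_iff_mem, map_sub, map_one, sub_eq_zero] at h1I
    exact IsPrimitiveRoot.iff_orderOf.mpr (orderOf_eq_prime hrI h1I)
  obtain ⟨f, rfl⟩ := (IsPrincipalIdealRing.principal J).principal
  have hf : f ∣ X ^ r - 1 := Ideal.mem_span_singleton.mp hrJ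
  have hsplit : Splits (f.map (algebraMap K (K[X] ⧸ I))) :=
    (X_pow_sub_one_splits hx).of_dvd (X_pow_sub_C_ne_zero hr.pos 1)
      (by simpa using Polynomial.map_dvd (algebraMap K (K[X] ⧸ I)) hf)
  have hdeg : (f.map (algebraMap K (K[X] ⧸ I))).degree ≠ 0 := by
    rw [degree_map, Ne, ← isUnit_iff_degree_eq_zero, ← Ideal.span_singleton_eq_top]
    exact hJ.ne_top
  obtain ⟨y, hy⟩ := hsplit.exists_eval_eq_zero hdeg
  have hyr : y ^ r = 1 := by
    obtain ⟨g, hg⟩ := hf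
    simpa [sub_eq_zero, hy] using congrArg (eval y ∘ map (algebraMap K (K[X] ⧸ I))) hg
  obtain ⟨k, -, rfl⟩ := hx.eq_pow_of_pow_eq_one hyr
  refine ⟨k, (hJ.eq_of_le (Ideal.comap_ne_top _ (Ideal.IsMaximal.ne_top ‹_›)) ?_).symm⟩
  rw [Ideal.span_singleton_le_iff_mem, Ideal.mem_comap, ← Ideal.Quotient.eq_zero_iff_mem, hmk,
    expand_aeval, aeval_def, eval₂_eq_eval_map, hy]

theorem LinearMap.GeneralLinearGroup.exists_ker_aeval_pow_eq {K V : Type*} [Field K]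
    [AddCommGroup V] [Module K V] {r : ℕ} (hr : r.Prime) {S T : GeneralLinearGroup K V}
    [IsSimpleModule K[X] (AEval' (S : Module.End K V))]
    [IsSimpleModule K[X] (AEval' (T : Module.End K V))]
    (hS : S ^ r = 1) (hS1 : S ≠ 1) (hT : T ^ r = 1) (hT1 : T ≠ 1) :
    ∃ k, S ^ k ≠ 1 ∧ RingHom.ker (aeval (R := K) (↑(S ^ k) : Module.End K V)) =
      RingHom.ker (aeval (R := K) (T : Module.End K V)) := by
  have := Module.End.ker_aeval_isMaximal (S : Module.End K V)
  have := Module.End.ker_aeval_isMaximal (T : Module.End K V)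
  obtain ⟨k, hk⟩ := exists_comap_expand_eq hr ((X_pow_sub_one_mem_ker_aeval_iff S r).mpr hS)
    (by simpa using (X_pow_sub_one_mem_ker_aeval_iff S 1).not.mpr hS1)
    ((X_pow_sub_one_mem_ker_aeval_iff T r).mpr hT)
  have hker : RingHom.ker (aeval (R := K) (↑(S ^ k) : Module.End K V)) =
      RingHom.ker (aeval (R := K) (T : Module.End K V)) := by
    rw [Units.val_pow_eq_pow_val, Module.End.ker_aeval_pow, hk]
  refine ⟨k, fun hSk => hT1 ?_, hker⟩
  rw [← pow_one T, ← X_pow_sub_one_mem_ker_aeval_iff, ← hker, X_pow_sub_one_mem_ker_aeval_iff,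
    pow_one, hSk]

namespace Subgroup

variable {Γ : Type*} [Group Γ]

theorem pow_natCard_eq_one (G : Subgroup Γ) {g : Γ} (hg : g ∈ G) : g ^ Nat.card G = 1 :=
  orderOf_dvd_iff_pow_eq_one.mp (G.orderOf_dvd_natCard hg)

theorem eq_zpowers_of_card_prime {G : Subgroup Γ} {p : ℕ} (hp : p.Prime) (hG : Nat.card G = p)
    {g : Γ} (hgG : g ∈ G) (hg1 : g ≠ 1) : G = zpowers g := by
  have : Finite G := Nat.finite_of_card_ne_zero (hG ▸ hp.ne_zero)
  have hdvd := G.orderOf_dvd_natCard hgG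
  rw [hG, Nat.dvd_prime hp, orderOf_eq_one_iff] at hdvd
  refine (eq_of_le_of_card_ge (zpowers_le.mpr hgG) ?_).symm
  rw [Nat.card_zpowers, hdvd.resolve_left hg1, hG]

theorem exists_ne_one_of_card_prime {G : Subgroup Γ} {p : ℕ} (hp : p.Prime)
    (hG : Nat.card G = p) : ∃ g ∈ G, g ≠ 1 :=
  G.bot_or_exists_ne_one.resolve_left fun h => hp.ne_one (by rw [← hG, h, card_bot])

theorem exists_map_conj_eq_of_card_prime {G H : Subgroup Γ} {p : ℕ} (hp : p.Prime)
    (hG : Nat.card G = p) (hH : Nat.card H = p) {g h : Γ} (hgG : g ∈ G) (hhH : h ∈ H)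
    (hh1 : h ≠ 1) (hgh : IsConj g h) : ∃ x : Γ, G.map (MulAut.conj x).toMonoidHom = H := by
  obtain ⟨x, hx⟩ := isConj_iff.mp hgh
  have hcard : Nat.card (G.map (MulAut.conj x).toMonoidHom) = p := by
    rw [card_map_of_injective (MulAut.conj x).injective, hG]
  have : Finite (G.map (MulAut.conj x).toMonoidHom) :=
    Nat.finite_of_card_ne_zero (hcard ▸ hp.ne_zero)
  refine ⟨x, (eq_of_le_of_card_ge ?_ (by rw [hcard, hH])).symm⟩
  rw [H.eq_zpowers_of_card_prime hp hH hhH hh1, zpowers_le, ← hx]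
  exact mem_map_of_mem _ hgG

end Subgroup

namespace IsIrreducibleSubgroup

open Matrix.GeneralLinearGroup

variable {α : ℕ} {F : Type*} [Field F] {r : ℕ}
  {G H : Subgroup (Matrix.GeneralLinearGroup (Fin α) F)}

theorem isSimpleModule_aeval (hG : IsIrreducibleSubgroup G)
    {g : Matrix.GeneralLinearGroup (Fin α) F} (hGg : G = Subgroup.zpowers g)
    (hg : IsOfFinOrder g) (hg1 : g ≠ 1) :
    IsSimpleModule F[X] (AEval' (toLin g : Module.End F (Fin α → F))) := by
  have : Nontrivial (Fin α → F) := by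
    by_contra h
    rw [not_nontrivial_iff_subsingleton] at h
    exact hg1 (toLin.injective (Units.ext (Subsingleton.elim _ _)))
  refine Module.End.isSimpleModule_aeval _ fun W hW => hG W fun u hu v hv => ?_
  rw [hGg, ← hg.mem_powers_iff_mem_zpowers] at hu
  obtain ⟨n, rfl⟩ := hu
  have := W.le_comap_pow_of_le_comap hW n hv
  rwa [Submodule.mem_comap, ← Units.val_pow_eq_pow_val, ← map_pow, coe_toLin] at this

theorem isSimpleModule_aeval_of_card_prime (hG : IsIrreducibleSubgroup G) (hr : r.Prime)
    (hGcard : Nat.card G = r) {u : Matrix.GeneralLinearGroup (Fin α) F} (huG : u ∈ G)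
    (hu1 : u ≠ 1) : IsSimpleModule F[X] (AEval' (toLin u : Module.End F (Fin α → F))) :=
  hG.isSimpleModule_aeval (G.eq_zpowers_of_card_prime hr hGcard huG hu1)
    (isOfFinOrder_iff_pow_eq_one.mpr ⟨r, hr.pos, hGcard ▸ G.pow_natCard_eq_one huG⟩) hu1

theorem exists_isConj_pow (hr : r.Prime) (hG : IsIrreducibleSubgroup G) (hGcard : Nat.card G = r)
    (hH : IsIrreducibleSubgroup H) (hHcard : Nat.card H = r)
    {g h : Matrix.GeneralLinearGroup (Fin α) F} (hgG : g ∈ G) (hg1 : g ≠ 1) (hhH : h ∈ H)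
    (hh1 : h ≠ 1) : ∃ k, IsConj (g ^ k) h := by
  have := hG.isSimpleModule_aeval_of_card_prime hr hGcard hgG hg1
  have := hH.isSimpleModule_aeval_of_card_prime hr hHcard hhH hh1
  have toLin_pow_eq_one {K : Subgroup (Matrix.GeneralLinearGroup (Fin α) F)}
      (hK : Nat.card K = r) {u} (hu : u ∈ K) : toLin u ^ r = 1 := by
    rw [← map_pow, ← hK, K.pow_natCard_eq_one hu, map_one]
  obtain ⟨k, hk1, hk⟩ := LinearMap.GeneralLinearGroup.exists_ker_aeval_pow_eq hr
    (toLin_pow_eq_one hGcard hgG) (toLin.map_ne_one_iff.mpr hg1)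
    (toLin_pow_eq_one hHcard hhH) (toLin.map_ne_one_iff.mpr hh1)
  rw [← map_pow] at hk hk1
  have := hG.isSimpleModule_aeval_of_card_prime hr hGcard (G.pow_mem hgG k)
    (toLin.map_ne_one_iff.mp hk1)
  refine ⟨k, ?_⟩
  simpa using toLin.symm.toMonoidHom.map_isConj
    (LinearMap.GeneralLinearGroup.isConj_of_ker_aeval_eq hk)

end IsIrreducibleSubgroup

theorem irreducible_cyclic_subgroups_conjugate_general (r α : ℕ) (F : Type*) [Field F]
    (hr : r.Prime)
    (G H : Subgroup (Matrix.GeneralLinearGroup (Fin α) F))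
    (hGirr : IsIrreducibleSubgroup G) (hGcard : Nat.card G = r)
    (hHirr : IsIrreducibleSubgroup H) (hHcard : Nat.card H = r) :
    ∃ x : Matrix.GeneralLinearGroup (Fin α) F,
      Subgroup.map (MulAut.conj x).toMonoidHom G = H := by
  obtain ⟨g, hgG, hg1⟩ := G.exists_ne_one_of_card_prime hr hGcard
  obtain ⟨h, hhH, hh1⟩ := H.exists_ne_one_of_card_prime hr hHcard
  obtain ⟨k, hk⟩ := hGirr.exists_isConj_pow hr hGcard hHirr hHcard hgG hg1 hhH hh1
  exact Subgroup.exists_map_conj_eq_of_card_prime hr hGcard hHcard (G.pow_mem hgG k) hhH hh1 hk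

/-- Any two irreducible cyclic subgroups of order r in GL(α, F_s), with r prime
coprime to s, are conjugate in GL(α, F_s). -/
theorem irreducible_cyclic_subgroups_conjugate (s r α : ℕ) (F : Type*) [Field F]
    [Fintype F] (hs : Fintype.card F = s) (hr : r.Prime) (hrs : Nat.Coprime r s)
    (G H : Subgroup (Matrix.GeneralLinearGroup (Fin α) F))
    (hGirr : IsIrreducibleSubgroup G) (hGcyc : IsCyclic G) (hGcard : Nat.card G = r)
    (hHirr : IsIrreducibleSubgroup H) (hHcyc : IsCyclic H) (hHcard : Nat.card H = r) :
    ∃ x : Matrix.GeneralLinearGroup (Fin α) F,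
      Subgroup.map (MulAut.conj x).toMonoidHom G = H :=
  irreducible_cyclic_subgroups_conjugate_general r α F hr G H hGirr hGcard hHirr hHcard
end

section
/- Let G be a finite group in the variety 𝔄_p𝔄_q𝔄_r for distinct primes p, q, r, and set G₁ = G/O_{p'}(G), G₂ = G/O_{q'}(G), G₃ = G/O_{r'}(G). Then the natural map G → G₁ × G₂ × G₃ is injective, i.e., O_{p'}(G) ∩ O_{q'}(G) ∩ O_{r'}(G) = 1. -/
/-!
Every element of a group in `𝔄_p𝔄_q𝔄_r` satisfies `g ^ (p * q * r) = 1`, while the intersection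
`O_{p'}(G) ∩ O_{q'}(G) ∩ O_{r'}(G)` has order coprime to `p * q * r`; by Lagrange the order of each
of its elements divides both, so it is trivial. That `O_{u'}(G)` itself has order coprime to `u`
holds because normal subgroups of order coprime to `u` are closed under joins, so the finite
supremum defining `O_{u'}(G)` is attained.
-/

/-- A group lies in the variety 𝔄_p𝔄_q𝔄_r: it has a normal series 1 ≤ N ≤ M ≤ G
with N abelian of exponent dividing p, M/N abelian of exponent dividing q, and
G/M abelian of exponent dividing r. -/
def InS (p q r : ℕ) (G : Type*) [Group G] : Prop :=
  ∃ N M : Subgroup G, N.Normal ∧ M.Normal ∧ N ≤ M ∧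
    (∀ a ∈ N, ∀ b ∈ N, a * b = b * a) ∧ (∀ a ∈ N, a ^ p = 1) ∧
    (∀ a ∈ M, ∀ b ∈ M, a * b * a⁻¹ * b⁻¹ ∈ N) ∧ (∀ a ∈ M, a ^ q ∈ N) ∧
    (∀ a b : G, a * b * a⁻¹ * b⁻¹ ∈ M) ∧ (∀ a : G, a ^ r ∈ M)

/-- O_{u'}(G): the largest normal subgroup of G of order coprime to u, realised
as the join of all normal subgroups of order coprime to u. -/
def Ocoprime (u : ℕ) (G : Type*) [Group G] : Subgroup G :=
  sSup {N : Subgroup G | N.Normal ∧ (Nat.card N).Coprime u}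

namespace Subgroup

variable {G : Type*} [Group G]

theorem card_sup_dvd_of_normal (H K : Subgroup G) [K.Normal] :
    Nat.card (H ⊔ K : Subgroup G) ∣ Nat.card H * Nat.card K := by
  rw [← relIndex_bot_left (H ⊔ K), ← relIndex_mul_relIndex ⊥ K (H ⊔ K) bot_le le_sup_right,
    relIndex_sup_right, relIndex_bot_left, mul_comm]
  exact mul_dvd_mul_right (relIndex_dvd_card K H) _

theorem eq_bot_of_card_coprime_of_pow_eq_one {H : Subgroup G} {n : ℕ}
    (hH : (Nat.card H).Coprime n) (hn : ∀ g ∈ H, g ^ n = 1) : H = ⊥ :=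
  (eq_bot_iff_forall H).mpr fun g hg => orderOf_eq_one_iff.mp <|
    Nat.eq_one_of_dvd_coprimes hH (orderOf_dvd_natCard H hg) (orderOf_dvd_of_pow_eq_one (hn g hg))

end Subgroup

theorem InS.pow_eq_one {p q r : ℕ} {G : Type*} [Group G] (hG : InS p q r G) (g : G) :
    g ^ (p * q * r) = 1 := by
  obtain ⟨N, M, -, -, -, -, hNp, -, hMq, -, hGr⟩ := hG
  rw [mul_comm p, mul_comm, pow_mul, pow_mul]
  exact hNp _ (hMq _ (hGr g))

theorem supClosed_normal_card_coprime (u : ℕ) (G : Type*) [Group G] :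
    SupClosed {N : Subgroup G | N.Normal ∧ (Nat.card N).Coprime u} := by
  rintro A ⟨hA, hAu⟩ B ⟨hB, hBu⟩
  exact ⟨Subgroup.sup_normal A B,
    (hAu.mul_left hBu).coprime_dvd_left (Subgroup.card_sup_dvd_of_normal A B)⟩

theorem Ocoprime_card_coprime (u : ℕ) (G : Type*) [Group G] [Finite G] :
    (Nat.card (Ocoprime u G)).Coprime u :=
  ((supClosed_normal_card_coprime u G).sSup_mem (Set.toFinite _)
    ⟨Subgroup.normal_bot, by simp⟩ subset_rfl).2

theorem Ocoprime_card_coprime_of_le {u : ℕ} {G : Type*} [Group G] [Finite G] {H : Subgroup G}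
    (hH : H ≤ Ocoprime u G) : (Nat.card H).Coprime u :=
  (Ocoprime_card_coprime u G).coprime_dvd_left (Subgroup.card_dvd_of_le hH)

theorem Ocoprime_inter_eq_bot_general (p q r : ℕ)
    (G : Type*) [Group G] [Finite G] (hG : InS p q r G) :
    Ocoprime p G ⊓ Ocoprime q G ⊓ Ocoprime r G = ⊥ := by
  refine Subgroup.eq_bot_of_card_coprime_of_pow_eq_one ?_ fun g _ => hG.pow_eq_one g
  refine Nat.Coprime.mul_right (Nat.Coprime.mul_right ?_ ?_) ?_
  · exact Ocoprime_card_coprime_of_le (inf_le_left.trans inf_le_left)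
  · exact Ocoprime_card_coprime_of_le (inf_le_left.trans inf_le_right)
  · exact Ocoprime_card_coprime_of_le inf_le_right

/-- For a finite group G in 𝔄_p𝔄_q𝔄_r, the intersection
O_{p'}(G) ∩ O_{q'}(G) ∩ O_{r'}(G) is trivial, i.e. the natural map
G → G/O_{p'}(G) × G/O_{q'}(G) × G/O_{r'}(G) is injective. -/
theorem Ocoprime_inter_eq_bot (p q r : ℕ) (hp : p.Prime) (hq : q.Prime)
    (hr : r.Prime) (hpq : p ≠ q) (hpr : p ≠ r) (hqr : q ≠ r)
    (G : Type*) [Group G] [Finite G] (hG : InS p q r G) :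
    Ocoprime p G ⊓ Ocoprime q G ⊓ Ocoprime r G = ⊥ :=
  Ocoprime_inter_eq_bot_general p q r G hG
end
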